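/- arXiv:2307.16597 — 7 statements merged into one kernel-verified Lean document; each statement's English description precedes it below -/
import Mathlib

section
/- Suppose f satisfies the linear group property on G, and A is a linear map on n×n real matrices such that f(exp(v)) − A(v) = o(‖v‖) as v → 0 with v ranging in 𝔤 (i.e., A is the differential at 0 of v ↦ exp(v)⁻¹·f(exp(v)) along 𝔤). Then for all x, y ∈ 𝔤 one has A([x,y]) = [A(x), y] + [x, A(y)], i.e., A acts as a derivation of the matrix commutator on 𝔤. (Lemma 1.) -/
/-!
Differentiating `f (g * exp (s • y) * g⁻¹)` at `s = 0` by the Leibniz rule, using that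
`g * exp (s • y) * g⁻¹ = exp (s • (g * y * g⁻¹))`, gives
`A (g y g⁻¹) = f(g) y g⁻¹ + g A(y) g⁻¹ + g y f(g⁻¹)` for `g ∈ G` and `y ∈ 𝔤`.
Differentiating this identity once more along `g = exp (t • x)` at `t = 0`, where `f 1 = 0`,
gives the derivation rule.
-/

open NormedSpace

attribute [local instance] Matrix.normedAddCommGroup Matrix.normedSpace

/-- `f` satisfies the linear group property on `G`:
`f (X*Y) = f X * Y + X * f Y` for all `X, Y ∈ G`. -/
def LinearGroupProp {n : ℕ} (G : Set (Matrix (Fin n) (Fin n) ℝ))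
    (f : Matrix (Fin n) (Fin n) ℝ → Matrix (Fin n) (Fin n) ℝ) : Prop :=
  ∀ X ∈ G, ∀ Y ∈ G, f (X * Y) = f X * Y + X * f Y

/-- `f` satisfies the affine group property on `G`:
`f (X*Y) = f X * Y + X * f Y - X * f 1 * Y` for all `X, Y ∈ G`. -/
def AffineGroupProp {n : ℕ} (G : Set (Matrix (Fin n) (Fin n) ℝ))
    (f : Matrix (Fin n) (Fin n) ℝ → Matrix (Fin n) (Fin n) ℝ) : Prop :=
  ∀ X ∈ G, ∀ Y ∈ G, f (X * Y) = f X * Y + X * f Y - X * f 1 * Y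

/-- `G` is a matrix Lie group: a closed subgroup of the group of invertible `n × n`
real matrices. -/
structure IsMatrixLieGroup {n : ℕ} (G : Set (Matrix (Fin n) (Fin n) ℝ)) : Prop where
  one_mem : (1 : Matrix (Fin n) (Fin n) ℝ) ∈ G
  mul_mem : ∀ {X Y : Matrix (Fin n) (Fin n) ℝ}, X ∈ G → Y ∈ G → X * Y ∈ G
  isUnit : ∀ {X : Matrix (Fin n) (Fin n) ℝ}, X ∈ G → IsUnit X
  inv_mem : ∀ {X : Matrix (Fin n) (Fin n) ℝ}, X ∈ G → X⁻¹ ∈ G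
  closed : IsClosed {A : {M : Matrix (Fin n) (Fin n) ℝ // IsUnit M} |
    (A : Matrix (Fin n) (Fin n) ℝ) ∈ G}

/-- The Lie algebra of the matrix Lie group `G`. -/
def lieAlgebraOf {n : ℕ} (G : Set (Matrix (Fin n) (Fin n) ℝ)) :
    Set (Matrix (Fin n) (Fin n) ℝ) :=
  {x | ∀ t : ℝ, exp (t • x) ∈ G}

open Filter Topology Asymptotics

/- The sup norm fixed above is not submultiplicative, so Mathlib's derivative of `exp` is taken
in the `L∞` operator norm; both norms induce the product topology, so the slope limit transfers. -/
section LinftyOp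

attribute [-instance] Matrix.normedAddCommGroup Matrix.normedSpace
attribute [local instance] Matrix.linftyOpNormedAddCommGroup Matrix.linftyOpNormedRing
  Matrix.linftyOpNormedAlgebra

theorem Matrix.tendsto_slope_exp_smul_zero {m : Type*} [Fintype m] [DecidableEq m]
    (x : Matrix m m ℝ) : Tendsto (slope (fun t : ℝ => exp (t • x)) 0) (𝓝[≠] 0) (𝓝 x) := by
  have h := hasDerivAt_iff_tendsto_slope.1 (hasDerivAt_exp_smul_const (𝕂 := ℝ) x 0)
  simp only [zero_smul, exp_zero, one_mul] at h
  exact h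

end LinftyOp

theorem Matrix.hasDerivAt_exp_smul_zero {m : Type*} [Fintype m] [DecidableEq m]
    (x : Matrix m m ℝ) : HasDerivAt (fun t : ℝ => exp (t • x)) x 0 :=
  hasDerivAt_iff_tendsto_slope.2 (tendsto_slope_exp_smul_zero x)

theorem HasDerivAt.matrix_mul {l m n : Type*} [Fintype l] [Fintype m] [Fintype n]
    {a : ℝ → Matrix l m ℝ} {b : ℝ → Matrix m n ℝ} {a' : Matrix l m ℝ} {b' : Matrix m n ℝ}
    {t : ℝ} (ha : HasDerivAt a a' t) (hb : HasDerivAt b b' t) :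
    HasDerivAt (fun s => a s * b s) (a' * b t + a t * b') t := by
  have h := (mulLinearMap ℝ).toContinuousBilinearMap.hasDerivAt_of_bilinear
    (fun _ => ha) (fun _ => hb)
  simp only [LinearMap.toContinuousBilinearMap_apply, mulLinearMap_apply_apply] at h
  rwa [add_comm] at h

theorem hasDerivAt_smul_of_isLittleO {E F : Type*} [NormedAddCommGroup E] [NormedSpace ℝ E]
    [NormedAddCommGroup F] [NormedSpace ℝ F] {S : Set E} {φ : E → F} {A : E →ₗ[ℝ] F}
    (hA : (fun v => φ v - A v) =o[𝓝[S] 0] fun v => v) (hφ : φ 0 = 0) {w : E}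
    (hw : ∀ s : ℝ, s • w ∈ S) : HasDerivAt (fun s : ℝ => φ (s • w)) (A w) 0 := by
  have hline : Tendsto (fun s : ℝ => s • w) (𝓝 0) (𝓝[S] 0) :=
    tendsto_nhdsWithin_iff.2
      ⟨by simpa using (tendsto_id (x := 𝓝 (0 : ℝ))).smul_const w,
        Eventually.of_forall hw⟩
  have hbound : (fun s : ℝ => s • w) =O[𝓝 0] fun s => s :=
    IsBigO.of_bound ‖w‖ (Eventually.of_forall fun s => by rw [norm_smul, mul_comm])
  rw [hasDerivAt_iff_isLittleO_nhds_zero]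
  simpa [Function.comp_def, hφ] using (hA.comp_tendsto hline).trans_isBigO hbound

theorem Matrix.exp_smul_conj {m : Type*} [Fintype m] [DecidableEq m] {g : Matrix m m ℝ}
    (hg : IsUnit g) (y : Matrix m m ℝ) (s : ℝ) :
    exp (s • (g * y * g⁻¹)) = g * exp (s • y) * g⁻¹ := by
  rw [← smul_mul_assoc, ← mul_smul_comm, Matrix.exp_conj g _ hg]

section LieAlgebra

variable {n : ℕ} {G : Set (Matrix (Fin n) (Fin n) ℝ)} {x : Matrix (Fin n) (Fin n) ℝ}

theorem smul_mem_lieAlgebraOf (hx : x ∈ lieAlgebraOf G) (c : ℝ) : c • x ∈ lieAlgebraOf G :=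
  fun t => by simpa [smul_smul] using hx (t * c)

theorem exp_mem_of_mem_lieAlgebraOf (hx : x ∈ lieAlgebraOf G) : exp x ∈ G := by
  simpa using hx 1

theorem IsMatrixLieGroup.conj_mem_lieAlgebraOf (hG : IsMatrixLieGroup G)
    {g : Matrix (Fin n) (Fin n) ℝ} (hg : g ∈ G) (hx : x ∈ lieAlgebraOf G) : g * x * g⁻¹ ∈ lieAlgebraOf G := fun t => by
  rw [Matrix.exp_smul_conj (hG.isUnit hg)]
  exact hG.mul_mem (hG.mul_mem hg (hx t)) (hG.inv_mem hg)

end LieAlgebra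

namespace LinearGroupProp

variable {n : ℕ} {G : Set (Matrix (Fin n) (Fin n) ℝ)}
  {f : Matrix (Fin n) (Fin n) ℝ → Matrix (Fin n) (Fin n) ℝ}

theorem map_one (hf : LinearGroupProp G f) (h1 : 1 ∈ G) : f 1 = 0 := by
  simpa using hf 1 h1 1 h1

theorem map_mul_mul (hf : LinearGroupProp G f) {g h k : Matrix (Fin n) (Fin n) ℝ}
    (hg : g ∈ G) (hh : h ∈ G) (hk : k ∈ G) (hhk : h * k ∈ G) :
    f (g * h * k) = f g * h * k + g * f h * k + g * h * f k := by
  rw [mul_assoc, hf g hg _ hhk, hf h hh k hk]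
  noncomm_ring

variable {A : Matrix (Fin n) (Fin n) ℝ →ₗ[ℝ] Matrix (Fin n) (Fin n) ℝ}

theorem hasDerivAt_comp_exp_smul (hf1 : f 1 = 0)
    (hA : (fun v => f (exp v) - A v) =o[𝓝[lieAlgebraOf G] 0] fun v => v)
    {w : Matrix (Fin n) (Fin n) ℝ} (hw : w ∈ lieAlgebraOf G) :
    HasDerivAt (fun s : ℝ => f (exp (s • w))) (A w) 0 :=
  hasDerivAt_smul_of_isLittleO hA (by rwa [exp_zero]) (smul_mem_lieAlgebraOf hw)

theorem differential_conj (hG : IsMatrixLieGroup G) (hf : LinearGroupProp G f)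
    (hA : (fun v => f (exp v) - A v) =o[𝓝[lieAlgebraOf G] 0] fun v => v)
    {g y : Matrix (Fin n) (Fin n) ℝ} (hg : g ∈ G) (hy : y ∈ lieAlgebraOf G) :
    A (g * y * g⁻¹) = f g * y * g⁻¹ + g * A y * g⁻¹ + g * y * f g⁻¹ := by
  have hf1 := hf.map_one hG.one_mem
  have hexp (s : ℝ) : exp (s • y) ∈ G := exp_mem_of_mem_lieAlgebraOf (smul_mem_lieAlgebraOf hy s)
  have hsplit (s : ℝ) : f (exp (s • (g * y * g⁻¹))) =
      f g * exp (s • y) * g⁻¹ + g * f (exp (s • y)) * g⁻¹ + g * exp (s • y) * f g⁻¹ := by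
    rw [Matrix.exp_smul_conj (hG.isUnit hg)]
    exact hf.map_mul_mul hg (hexp s) (hG.inv_mem hg) (hG.mul_mem (hexp s) (hG.inv_mem hg))
  have hE := Matrix.hasDerivAt_exp_smul_zero y
  have hF := hasDerivAt_comp_exp_smul hf1 hA hy
  have hL := hasDerivAt_comp_exp_smul hf1 hA (hG.conj_mem_lieAlgebraOf hg hy)
  have hR := ((((hasDerivAt_const 0 (f g)).matrix_mul hE).matrix_mul (hasDerivAt_const 0 g⁻¹)).add
    (((hasDerivAt_const 0 g).matrix_mul hF).matrix_mul (hasDerivAt_const 0 g⁻¹))).add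
    (((hasDerivAt_const 0 g).matrix_mul hE).matrix_mul (hasDerivAt_const 0 (f g⁻¹)))
  simp only [hsplit] at hL
  simpa [hf1] using hL.unique hR

end LinearGroupProp

theorem differential_is_derivation_general {n : ℕ}
    (G : Set (Matrix (Fin n) (Fin n) ℝ)) (hG : IsMatrixLieGroup G)
    (f : Matrix (Fin n) (Fin n) ℝ → Matrix (Fin n) (Fin n) ℝ)
    (hf : LinearGroupProp G f)
    (A : Matrix (Fin n) (Fin n) ℝ →ₗ[ℝ] Matrix (Fin n) (Fin n) ℝ)
    (hA : (fun v => f (exp v) - A v)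
      =o[nhdsWithin (0 : Matrix (Fin n) (Fin n) ℝ) (lieAlgebraOf G)] (fun v => v)) :
    ∀ x ∈ lieAlgebraOf G, ∀ y ∈ lieAlgebraOf G,
      A (x * y - y * x) = (A x * y - y * A x) + (x * A y - A y * x) := by
  intro x hx y hy
  have hf1 := hf.map_one hG.one_mem
  have hconj (t : ℝ) : A (exp (t • x) * y * exp (t • -x)) = f (exp (t • x)) * y * exp (t • -x)
      + exp (t • x) * A y * exp (t • -x) + exp (t • x) * y * f (exp (t • -x)) := by
    rw [smul_neg, Matrix.exp_neg]
    exact hf.differential_conj hG hA (exp_mem_of_mem_lieAlgebraOf (smul_mem_lieAlgebraOf hx t)) hy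
  have hE := Matrix.hasDerivAt_exp_smul_zero x
  have hE' := Matrix.hasDerivAt_exp_smul_zero (-x)
  have hF := LinearGroupProp.hasDerivAt_comp_exp_smul hf1 hA hx
  have hF' := LinearGroupProp.hasDerivAt_comp_exp_smul hf1 hA
    (by simpa using smul_mem_lieAlgebraOf hx (-1))
  have hL := (LinearMap.toContinuousLinearMap A).hasFDerivAt.comp_hasDerivAt (0 : ℝ)
    ((hE.matrix_mul (hasDerivAt_const 0 y)).matrix_mul hE')
  have hR := (((hF.matrix_mul (hasDerivAt_const 0 y)).matrix_mul hE').add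
    ((hE.matrix_mul (hasDerivAt_const 0 (A y))).matrix_mul hE')).add
    ((hE.matrix_mul (hasDerivAt_const 0 y)).matrix_mul hF')
  simp only [Function.comp_def, LinearMap.coe_toContinuousLinearMap', hconj] at hL
  have key := hL.unique hR
  simp only [zero_smul, exp_zero, smul_neg, hf1, map_neg, mul_zero, zero_mul, add_zero, zero_add,
    neg_zero, mul_one, one_mul, mul_neg] at key
  change A _ = _ at key
  rw [sub_eq_add_neg, key]
  abel

/-- **Lemma 1.** If `f` satisfies the linear group property on `G` and `A` is the
differential at `0` of `v ↦ exp(v)⁻¹ * f (exp v)` along the Lie algebra `𝔤` of `G`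
(i.e. `f (exp v) - A v = o(‖v‖)` as `v → 0` in `𝔤`), then `A` is a derivation of the
matrix commutator on `𝔤`: `A [x,y] = [A x, y] + [x, A y]` for all `x, y ∈ 𝔤`. -/
theorem differential_is_derivation {n : ℕ} (hn : 0 < n)
    (G : Set (Matrix (Fin n) (Fin n) ℝ)) (hG : IsMatrixLieGroup G)
    (f : Matrix (Fin n) (Fin n) ℝ → Matrix (Fin n) (Fin n) ℝ)
    (hf : LinearGroupProp G f)
    (A : Matrix (Fin n) (Fin n) ℝ →ₗ[ℝ] Matrix (Fin n) (Fin n) ℝ)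
    (hA : (fun v => f (exp v) - A v)
      =o[nhdsWithin (0 : Matrix (Fin n) (Fin n) ℝ) (lieAlgebraOf G)] (fun v => v)) :
    ∀ x ∈ lieAlgebraOf G, ∀ y ∈ lieAlgebraOf G,
      A (x * y - y * x) = (A x * y - y * A x) + (x * A y - A y * x) :=
  differential_is_derivation_general G hG f hf A hA
end

section
/- Let f : ℝ → (n×n real matrices → n×n real matrices) be a time-dependent vector field and let φ : ℝ → (G → G) be its transition flow, i.e., φ_0(X) = X for all X ∈ G, and for every X ∈ G the curve t ↦ φ_t(X) is differentiable with derivative f_t(φ_t(X)) at every t ≥ 0. If the flow is a group homomorphism at each time, i.e., φ_t(XY) = φ_t(X)·φ_t(Y) for all X, Y ∈ G and t ≥ 0, then f_0 satisfies the linear group property on G: f_0(XY) = f_0(X)·Y + X·f_0(Y) for all X, Y ∈ G. (Proposition 1, implication (ii) ⟹ (i).) -/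
open NormedSpace

attribute [local instance] Matrix.normedAddCommGroup Matrix.normedSpace

/-!
Differentiate `φ t (X * Y) = φ t X * φ t Y` at `t = 0`: by the product rule and `φ 0 = id`
the right-hand side has derivative `f 0 X * Y + X * f 0 Y`, the left-hand side `f 0 (X * Y)`.
The identity only holds for `t ≥ 0`, so both are compared as derivatives within `[0, ∞)`,
which are still unique.
-/

section MatrixMul

variable {𝕜 : Type*} [NontriviallyNormedField 𝕜] [CompleteSpace 𝕜] {l m p : Type*}
  [Fintype l] [Fintype m] [Fintype p]

noncomputable def Matrix.mulCLM :
    Matrix l m 𝕜 →L[𝕜] Matrix m p 𝕜 →L[𝕜] Matrix l p 𝕜 :=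
  LinearMap.toContinuousLinearMap
    (LinearMap.toContinuousLinearMap.toLinearMap ∘ₗ mulLinearMap 𝕜)

@[simp]
theorem Matrix.mulCLM_apply (A : Matrix l m 𝕜) (B : Matrix m p 𝕜) :
    Matrix.mulCLM A B = A * B :=
  rfl

theorem HasDerivWithinAt.matrix_mul {c : 𝕜 → Matrix l m 𝕜} {d : 𝕜 → Matrix m p 𝕜}
    {c' : Matrix l m 𝕜} {d' : Matrix m p 𝕜} {s : Set 𝕜} {x : 𝕜}
    (hc : HasDerivWithinAt c c' s x) (hd : HasDerivWithinAt d d' s x) :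
    HasDerivWithinAt (fun t => c t * d t) (c' * d x + c x * d') s x := by
  have h := Matrix.mulCLM.hasDerivWithinAt_of_bilinear hc hd
  rw [add_comm] at h
  exact h

end MatrixMul

theorem linearGroupProp_of_flow_hom_general {n : ℕ}
    (G : Set (Matrix (Fin n) (Fin n) ℝ)) (hG : IsMatrixLieGroup G)
    (f : ℝ → Matrix (Fin n) (Fin n) ℝ → Matrix (Fin n) (Fin n) ℝ)
    (φ : ℝ → Matrix (Fin n) (Fin n) ℝ → Matrix (Fin n) (Fin n) ℝ)
    (hφ_zero : ∀ X ∈ G, φ 0 X = X)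
    (hφ_deriv : ∀ X ∈ G, ∀ t : ℝ, 0 ≤ t → HasDerivAt (fun s => φ s X) (f t (φ t X)) t)
    (hφ_hom : ∀ t : ℝ, 0 ≤ t → ∀ X ∈ G, ∀ Y ∈ G, φ t (X * Y) = φ t X * φ t Y) :
    LinearGroupProp G (f 0) := by
  intro X hX Y hY
  have hderiv_zero : ∀ Z ∈ G, HasDerivWithinAt (fun s => φ s Z) (f 0 Z) (Set.Ici 0) 0 :=
    fun Z hZ => by
      have h := (hφ_deriv Z hZ 0 le_rfl).hasDerivWithinAt (s := Set.Ici 0)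
      rwa [hφ_zero Z hZ] at h
  have hprod : HasDerivWithinAt (fun s => φ s X * φ s Y) (f 0 X * Y + X * f 0 Y)
      (Set.Ici 0) 0 := by
    simpa [hφ_zero X hX, hφ_zero Y hY] using (hderiv_zero X hX).matrix_mul (hderiv_zero Y hY)
  have hmul : HasDerivWithinAt (fun s => φ s (X * Y)) (f 0 X * Y + X * f 0 Y)
      (Set.Ici 0) 0 :=
    hprod.congr_of_mem (fun t ht => hφ_hom t ht X hX Y hY) Set.self_mem_Ici
  exact (uniqueDiffOn_Ici 0 0 Set.self_mem_Ici).eq_deriv _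
    (hderiv_zero _ (hG.mul_mem hX hY)) hmul

/-- **Proposition 1, (ii) ⟹ (i).** If the transition flow `φ` of the time-dependent
vector field `f` on `G` is a group homomorphism at each time `t ≥ 0`, then `f 0`
satisfies the linear group property on `G`. -/
theorem linearGroupProp_of_flow_hom {n : ℕ} (hn : 0 < n)
    (G : Set (Matrix (Fin n) (Fin n) ℝ)) (hG : IsMatrixLieGroup G)
    (f : ℝ → Matrix (Fin n) (Fin n) ℝ → Matrix (Fin n) (Fin n) ℝ)
    (φ : ℝ → Matrix (Fin n) (Fin n) ℝ → Matrix (Fin n) (Fin n) ℝ)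
    (hφ_mem : ∀ t : ℝ, 0 ≤ t → ∀ X ∈ G, φ t X ∈ G)
    (hφ_zero : ∀ X ∈ G, φ 0 X = X)
    (hφ_deriv : ∀ X ∈ G, ∀ t : ℝ, 0 ≤ t → HasDerivAt (fun s => φ s X) (f t (φ t X)) t)
    (hφ_hom : ∀ t : ℝ, 0 ≤ t → ∀ X ∈ G, ∀ Y ∈ G, φ t (X * Y) = φ t X * φ t Y) :
    LinearGroupProp G (f 0) :=
  linearGroupProp_of_flow_hom_general G hG f φ hφ_zero hφ_deriv hφ_hom
end

section
/- Let f : ℝ → (n×n real matrices → n×n real matrices) be such that f_t satisfies the linear group property on G for every t, and for each t let A_t be a linear map on n×n matrices preserving 𝔤 with f_t(exp(v)) − A_t(v) = o(‖v‖) as v → 0 with v ∈ 𝔤 (i.e., A_t is the differential at 0 of v ↦ exp(v)⁻¹·f_t(exp(v)) along 𝔤). If x : ℝ → 𝔤 is a differentiable curve solving the linear ordinary differential equation dx_t/dt = A_t(x_t), then the curve X_t := exp(x_t) in G is differentiable with dX_t/dt = f_t(X_t); that is, trajectories of a linear group system are exponentials of trajectories of the linear system dx/dt = A_t x in the Lie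 algebra. (Proposition 1, equivalence of (i) and (iii).) -/
open NormedSpace

attribute [local instance] Matrix.normedAddCommGroup Matrix.normedSpace

/-!
Fix `t` and write `v = x t`, `w = A t v`. On the one-parameter subgroup `r ↦ exp (r • v)` of `G`
the linear group property turns `ψ r = f t (exp (r • v))` into a solution of the linear equation
`ψ' = v * ψ + w * exp (r • v)`, `ψ 0 = 0`, where `ψ' 0 = w` is the content of `hA_diff`. The
upper right block of `exp (r • [[v, w], [0, v]])` solves the same equation, so `f t (exp v)` is the
upper right block of `exp [[v, w], [0, v]]`. Conjugating `[[v + s • w, w], [0, v]]` to the block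
diagonal matrix `diag (v + s • w, v)` identifies that block with the derivative of `exp` at `v` in
the direction `w`, and `w = x' t`: this is the chain rule for `exp ∘ x`.
-/

theorem hasDerivAt_comp_smul_of_isLittleO {E F : Type*} [NormedAddCommGroup E] [NormedSpace ℝ E]
    [NormedAddCommGroup F] [NormedSpace ℝ F] {g : E → F} {L : E →ₗ[ℝ] F} {S : Set E}
    (hg : (fun u => g u - L u) =o[nhdsWithin 0 S] fun u => u) {v : E} (hv : ∀ r : ℝ, r • v ∈ S) :
    HasDerivAt (fun r : ℝ => g (r • v)) (L v) 0 := by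
  have hray : Filter.Tendsto (fun r : ℝ => r • v) (nhds 0) (nhdsWithin 0 S) :=
    tendsto_nhdsWithin_iff.mpr ⟨(continuous_id.smul continuous_const).tendsto' _ _ (zero_smul ℝ v),
      Filter.Eventually.of_forall hv⟩
  have hlin : (fun r : ℝ => r • v) =O[nhds 0] fun r => r :=
    Asymptotics.IsBigO.of_bound ‖v‖ (Filter.Eventually.of_forall fun r => by
      rw [norm_smul, mul_comm, Real.norm_eq_abs])
  have ho := (hg.comp_tendsto hray).trans_isBigO hlin
  have hg0 : g 0 = 0 := by
    simpa using ho.isBigO.eq_zero_imp.self_of_nhds rfl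
  refine hasDerivAt_iff_isLittleO.mpr (ho.congr' ?_ (Filter.Eventually.of_forall fun r => ?_))
  · exact Filter.Eventually.of_forall fun r => by simp [hg0]
  · simp

section LinearODE

variable {𝔸 : Type*} [NormedRing 𝔸] [NormedAlgebra ℝ 𝔸] [NormedAlgebra ℚ 𝔸] [CompleteSpace 𝔸]

theorem eq_exp_smul_mul_of_hasDerivAt {v : 𝔸} {y : ℝ → 𝔸}
    (hy : ∀ s, HasDerivAt y (v * y s) s) (s : ℝ) : y s = exp (s • v) * y 0 := by
  have hderiv : ∀ u : ℝ, HasDerivAt (fun r : ℝ => exp ((-r) • v) * y r) 0 u := by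
    intro u
    have hexp := (hasDerivAt_exp_smul_const' v (-u)).scomp u (hasDerivAt_neg u)
    refine (hexp.mul (hy u)).congr_deriv ?_
    simp only [Function.comp_apply, neg_one_smul, neg_mul, ← mul_assoc]
    rw [((Commute.refl v).smul_right (-u)).exp_right.eq, neg_add_cancel]
  have hconst : exp ((-s) • v) * y s = y 0 := by
    simpa using is_const_of_deriv_eq_zero (fun u => (hderiv u).differentiableAt)
      (fun u => (hderiv u).deriv) s 0
  rw [← hconst, ← mul_assoc, ← exp_add_of_commute (((Commute.refl v).smul_left s).smul_right _),
    ← add_smul, add_neg_cancel, zero_smul, exp_zero, one_mul]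

theorem eq_of_hasDerivAt_mul_add {v : 𝔸} {g y z : ℝ → 𝔸}
    (hy : ∀ s, HasDerivAt y (v * y s + g s) s) (hz : ∀ s, HasDerivAt z (v * z s + g s) s)
    (h0 : y 0 = z 0) (s : ℝ) : y s = z s := by
  have hdiff : ∀ s, HasDerivAt (fun r => y r - z r) (v * (y s - z s)) s := fun s => by
    refine ((hy s).sub (hz s)).congr_deriv ?_
    rw [mul_sub]
    abel
  simpa [h0, sub_eq_zero] using eq_exp_smul_mul_of_hasDerivAt hdiff s

theorem hasDerivAt_comp_exp_smul_of_derivation {f : 𝔸 → 𝔸} {v w : 𝔸}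
    (hf : ∀ r s : ℝ, f (exp (r • v) * exp (s • v)) =
      f (exp (r • v)) * exp (s • v) + exp (r • v) * f (exp (s • v)))
    (hw : HasDerivAt (fun r : ℝ => f (exp (r • v))) w 0) (s : ℝ) :
    HasDerivAt (fun r : ℝ => f (exp (r • v))) (v * f (exp (s • v)) + w * exp (s • v)) s := by
  have hsplit : (fun r : ℝ => f (exp (r • v))) = fun r =>
      f (exp ((r - s) • v)) * exp (s • v) + exp ((r - s) • v) * f (exp (s • v)) := by
    funext r
    rw [← hf, ← exp_add_of_commute (((Commute.refl v).smul_left _).smul_right _), ← add_smul,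
      sub_add_cancel]
  have hf' : HasDerivAt (fun r : ℝ => f (exp ((r - s) • v))) w s :=
    HasDerivAt.comp_sub_const (f := fun r : ℝ => f (exp (r • v))) s s (by rwa [sub_self])
  have hexp : HasDerivAt (fun r : ℝ => exp ((r - s) • v)) v s := by
    simpa using (hasDerivAt_exp_smul_const' v (s - s)).comp_sub_const s s
  rw [hsplit, add_comm (v * _)]
  exact (hf'.mul_const _).add (hexp.mul_const _)

end LinearODE

section MatrixExp

attribute [local instance] Matrix.linftyOpNormedAddCommGroup Matrix.linftyOpNormedSpace
  Matrix.linftyOpNormedRing Matrix.linftyOpNormedAlgebra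

open Matrix

theorem HasDerivAt.matrix_submatrix {l m l' m' : Type*} [Fintype l] [Fintype m] [Fintype l']
    [Fintype m'] {F : ℝ → Matrix l m ℝ} {F' : Matrix l m ℝ} {t : ℝ} (hF : HasDerivAt F F' t)
    (p : l' → l) (q : m' → m) :
    HasDerivAt (fun s => (F s).submatrix p q) (F'.submatrix p q) t :=
  let L : Matrix l m ℝ →ₗ[ℝ] Matrix l' m' ℝ :=
    { toFun := fun X => X.submatrix p q
      map_add' := fun _ _ => rfl
      map_smul' := fun _ _ => rfl }
  (LinearMap.toContinuousLinearMap L).hasFDerivAt.comp_hasDerivAt t hF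

theorem Matrix.fromBlocks_zero₂₁_mul {m α : Type*} [Fintype m] [NonUnitalNonAssocSemiring α]
    (a b d : Matrix m m α) (M : Matrix (m ⊕ m) (m ⊕ m) α) :
    fromBlocks a b 0 d * M = fromBlocks (a * M.toBlocks₁₁ + b * M.toBlocks₂₁)
      (a * M.toBlocks₁₂ + b * M.toBlocks₂₂) (d * M.toBlocks₂₁) (d * M.toBlocks₂₂) := by
  conv_lhs => rw [← fromBlocks_toBlocks M, fromBlocks_multiply]
  simp

variable {l m : Type*} [Fintype l] [DecidableEq l] [Fintype m] [DecidableEq m]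

theorem Matrix.toBlocks₂₂_exp_smul_fromBlocks (a b d : Matrix m m ℝ) (s : ℝ) :
    (exp (s • fromBlocks a b 0 d)).toBlocks₂₂ = exp (s • d) := by
  have hy : ∀ u : ℝ, HasDerivAt (fun r : ℝ => (exp (r • fromBlocks a b 0 d)).toBlocks₂₂)
      (d * (exp (u • fromBlocks a b 0 d)).toBlocks₂₂) u := fun u => by
    have h := (hasDerivAt_exp_smul_const' (fromBlocks a b 0 d) u).matrix_submatrix Sum.inr Sum.inr
    rwa [fromBlocks_zero₂₁_mul] at h
  rw [eq_exp_smul_mul_of_hasDerivAt hy s, zero_smul, exp_zero, ← fromBlocks_one,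
    toBlocks_fromBlocks₂₂, mul_one]
  rfl

theorem Matrix.hasDerivAt_toBlocks₁₂_exp_smul_fromBlocks (a b d : Matrix m m ℝ) (s : ℝ) :
    HasDerivAt (fun r : ℝ => (exp (r • fromBlocks a b 0 d)).toBlocks₁₂)
      (a * (exp (s • fromBlocks a b 0 d)).toBlocks₁₂ + b * exp (s • d)) s := by
  have h := (hasDerivAt_exp_smul_const' (fromBlocks a b 0 d) s).matrix_submatrix Sum.inl Sum.inr
  rw [fromBlocks_zero₂₁_mul] at h
  refine h.congr_deriv ?_
  rw [← toBlocks₂₂_exp_smul_fromBlocks a b d s]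
  rfl

theorem Matrix.apply_exp_eq_toBlocks₁₂_of_derivation {f : Matrix m m ℝ → Matrix m m ℝ}
    {v w : Matrix m m ℝ}
    (hf : ∀ r s : ℝ, f (exp (r • v) * exp (s • v)) =
      f (exp (r • v)) * exp (s • v) + exp (r • v) * f (exp (s • v)))
    (hw : HasDerivAt (fun r : ℝ => f (exp (r • v))) w 0) :
    f (exp v) = (exp (fromBlocks v w 0 v)).toBlocks₁₂ := by
  have hf1 : f 1 = 0 := by simpa using hf 0 0
  have h := eq_of_hasDerivAt_mul_add (hasDerivAt_comp_exp_smul_of_derivation hf hw)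
    (hasDerivAt_toBlocks₁₂_exp_smul_fromBlocks v w v) ?_ 1
  · rwa [one_smul, one_smul] at h
  · simp [hf1, ← fromBlocks_one]

def Matrix.fromBlocksDiagRingHom (α : Type*) [Semiring α] :
    Matrix l l α × Matrix m m α →+* Matrix (l ⊕ m) (l ⊕ m) α where
  toFun p := fromBlocks p.1 0 0 p.2
  map_one' := fromBlocks_one
  map_mul' p q := by simp [fromBlocks_multiply]
  map_zero' := fromBlocks_zero
  map_add' p q := by simp [fromBlocks_add]

theorem Matrix.exp_fromBlocks_zero_zero (a : Matrix l l ℝ) (d : Matrix m m ℝ) :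
    exp (fromBlocks a 0 0 d) = fromBlocks (exp a) 0 0 (exp d) := by
  have hcont : Continuous (fromBlocksDiagRingHom (l := l) (m := m) ℝ) :=
    continuous_fst.matrix_fromBlocks continuous_const continuous_const continuous_snd
  have h := map_exp _ hcont (a, d)
  simp only [fromBlocksDiagRingHom, RingHom.coe_mk, MonoidHom.coe_mk, OneHom.coe_mk,
    Prod.fst_exp, Prod.snd_exp] at h
  exact h.symm

theorem Matrix.toBlocks₁₂_exp_fromBlocks_mul_sub_mul (a : Matrix l l ℝ) (c : Matrix l m ℝ)
    (d : Matrix m m ℝ) :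
    (exp (fromBlocks a (a * c - c * d) 0 d)).toBlocks₁₂ = exp a * c - c * exp d := by
  have hT : (fromBlocks 1 (-c) 0 1 : Matrix (l ⊕ m) (l ⊕ m) ℝ) * fromBlocks 1 c 0 1 = 1 := by
    simp [fromBlocks_multiply]
  have hconj : fromBlocks a (a * c - c * d) 0 d =
      fromBlocks 1 (-c) 0 1 * fromBlocks a 0 0 d * (fromBlocks 1 (-c) 0 1)⁻¹ := by
    rw [inv_eq_right_inv hT]
    simp [fromBlocks_multiply, sub_eq_add_neg, add_comm]
  rw [hconj, exp_conj _ _ (IsUnit.of_mul_eq_one _ hT), inv_eq_right_inv hT,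
    exp_fromBlocks_zero_zero]
  simp [fromBlocks_multiply, sub_eq_add_neg, add_comm]

theorem Matrix.hasDerivAt_exp_add_smul (v w : Matrix m m ℝ) :
    HasDerivAt (fun s : ℝ => exp (v + s • w)) (exp (fromBlocks v w 0 v)).toBlocks₁₂ 0 := by
  have hslope : ∀ s ≠ (0 : ℝ), slope (fun s : ℝ => exp (v + s • w)) 0 s =
      (exp (fromBlocks (v + s • w) w 0 v)).toBlocks₁₂ := fun s hs => by
    have hw : w = (v + s • w) * (s⁻¹ • 1) - s⁻¹ • 1 * v := by
      rw [Matrix.mul_smul, Matrix.smul_mul, mul_one, one_mul, ← smul_sub, add_sub_cancel_left,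
        smul_smul, inv_mul_cancel₀ hs, one_smul]
    have h := toBlocks₁₂_exp_fromBlocks_mul_sub_mul (v + s • w) (s⁻¹ • 1) v
    rw [← hw] at h
    rw [h, slope_def_module, sub_zero, zero_smul, add_zero, Matrix.mul_smul, Matrix.smul_mul,
      mul_one, one_mul, smul_sub]
  have hblocks : Continuous fun s : ℝ => fromBlocks (v + s • w) w 0 v :=
    (continuous_const.add (continuous_id.smul continuous_const)).matrix_fromBlocks
      continuous_const continuous_const continuous_const
  have hcont : Continuous fun s : ℝ => (exp (fromBlocks (v + s • w) w 0 v)).toBlocks₁₂ :=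
    (exp_continuous.comp hblocks).matrix_submatrix Sum.inl Sum.inr
  refine hasDerivAt_iff_tendsto_slope.mpr
    (((hcont.tendsto' 0 _ (by simp)).mono_left nhdsWithin_le_nhds).congr' ?_)
  filter_upwards [self_mem_nhdsWithin] with s hs
  exact (hslope s hs).symm

theorem Matrix.fderiv_exp_apply (v w : Matrix m m ℝ) :
    fderiv ℝ exp v w = (exp (fromBlocks v w 0 v)).toBlocks₁₂ := by
  have hline : HasDerivAt (fun s : ℝ => v + s • w) w 0 :=
    (((hasDerivAt_id (0 : ℝ)).smul_const w).const_add v).congr_deriv (one_smul ℝ w)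
  have hexp : HasFDerivAt exp (fderiv ℝ exp v) (v + (0 : ℝ) • w) := by
    rw [zero_smul, add_zero]
    exact (exp_analytic v).differentiableAt.hasFDerivAt
  exact (hexp.comp_hasDerivAt 0 hline).unique (hasDerivAt_exp_add_smul v w)

theorem HasDerivAt.matrix_exp {x : ℝ → Matrix m m ℝ} {w : Matrix m m ℝ} {t : ℝ}
    (hx : HasDerivAt x w t) :
    HasDerivAt (fun s => NormedSpace.exp (x s))
      (NormedSpace.exp (fromBlocks (x t) w 0 (x t))).toBlocks₁₂ t := by
  rw [← fderiv_exp_apply]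
  exact (exp_analytic (x t)).differentiableAt.hasFDerivAt.comp_hasDerivAt t hx

end MatrixExp

open Matrix in
theorem exp_of_linear_system_solves_group_system_general {n : ℕ}
    (G : Set (Matrix (Fin n) (Fin n) ℝ))
    (f : ℝ → Matrix (Fin n) (Fin n) ℝ → Matrix (Fin n) (Fin n) ℝ)
    (hf : ∀ t : ℝ, LinearGroupProp G (f t))
    (A : ℝ → Matrix (Fin n) (Fin n) ℝ →ₗ[ℝ] Matrix (Fin n) (Fin n) ℝ)
    (hA_diff : ∀ t : ℝ, (fun v => f t (exp v) - A t v)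
      =o[nhdsWithin (0 : Matrix (Fin n) (Fin n) ℝ) (lieAlgebraOf G)] (fun v => v))
    (x : ℝ → Matrix (Fin n) (Fin n) ℝ)
    (hx_mem : ∀ t : ℝ, x t ∈ lieAlgebraOf G)
    (hx_deriv : ∀ t : ℝ, HasDerivAt x (A t (x t)) t) :
    ∀ t : ℝ, HasDerivAt (fun s => exp (x s)) (f t (exp (x t))) t := by
  intro t
  have hray : ∀ r : ℝ, r • x t ∈ lieAlgebraOf G := fun r u => by
    rw [smul_smul]
    exact hx_mem t (u * r)
  have hw : HasDerivAt (fun r : ℝ => f t (exp (r • x t))) (A t (x t)) 0 :=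
    hasDerivAt_comp_smul_of_isLittleO (hA_diff t) hray
  -- `hasDerivAt_iff_tendsto_slope` carries derivatives between the sup norm and the
  -- `L∞`-operator norm of the lemmas above: both induce the same topology.
  have hexp : f t (exp (x t)) = (exp (fromBlocks (x t) (A t (x t)) 0 (x t))).toBlocks₁₂ :=
    apply_exp_eq_toBlocks₁₂_of_derivation (fun r s => hf t _ (hx_mem t r) _ (hx_mem t s))
      (hasDerivAt_iff_tendsto_slope.mpr (hasDerivAt_iff_tendsto_slope.mp hw))
  rw [hexp]
  exact hasDerivAt_iff_tendsto_slope.mpr (hasDerivAt_iff_tendsto_slope.mp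
    (hasDerivAt_iff_tendsto_slope.mpr (hasDerivAt_iff_tendsto_slope.mp (hx_deriv t))).matrix_exp)

/-- **Proposition 1, (i) ⟺ (iii).** Suppose `f t` satisfies the linear group property
on `G` for every `t`, and for each `t`, `A t` is a linear map preserving the Lie
algebra `𝔤` of `G` which is the differential at `0` of `v ↦ exp(v)⁻¹ * f t (exp v)`
along `𝔤`. If `x` is a differentiable curve in `𝔤` solving `dx/dt = A t (x t)`, then
`X t := exp (x t)` is differentiable with `dX/dt = f t (X t)`. -/
theorem exp_of_linear_system_solves_group_system {n : ℕ} (hn : 0 < n)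
    (G : Set (Matrix (Fin n) (Fin n) ℝ)) (hG : IsMatrixLieGroup G)
    (f : ℝ → Matrix (Fin n) (Fin n) ℝ → Matrix (Fin n) (Fin n) ℝ)
    (hf : ∀ t : ℝ, LinearGroupProp G (f t))
    (A : ℝ → Matrix (Fin n) (Fin n) ℝ →ₗ[ℝ] Matrix (Fin n) (Fin n) ℝ)
    (hA_preserve : ∀ t : ℝ, ∀ v ∈ lieAlgebraOf G, A t v ∈ lieAlgebraOf G)
    (hA_diff : ∀ t : ℝ, (fun v => f t (exp v) - A t v)
      =o[nhdsWithin (0 : Matrix (Fin n) (Fin n) ℝ) (lieAlgebraOf G)] (fun v => v))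
    (x : ℝ → Matrix (Fin n) (Fin n) ℝ)
    (hx_mem : ∀ t : ℝ, x t ∈ lieAlgebraOf G)
    (hx_deriv : ∀ t : ℝ, HasDerivAt x (A t (x t)) t) :
    ∀ t : ℝ, HasDerivAt (fun s => exp (x s)) (f t (exp (x t))) t :=
  exp_of_linear_system_solves_group_system_general G f hf A hA_diff x hx_mem hx_deriv
end

section
/- Let 𝔤 be a Lie subalgebra of the n×n real matrices (a linear subspace closed under the matrix commutator [a,b] = ab − ba). Let A : ℝ → (continuous linear endomorphisms of 𝔤) be continuous in t and suppose every A_t is a derivation of the commutator: A_t([y, y']) = [A_t(y), y'] + [y, A_t(y')] for all y, y' ∈ 𝔤 and all t. If y₀, y₁, y₂ : ℝ → 𝔤 are differentiable curves satisfying dyᵢ(t)/dt = A_t(yᵢ(t)) for all t ≥ t₀ (i = 0,1,2) and y₀(t₀) = [y₁(t₀), y₂(t₀)], then y₀(t) = [y₁(t), y₂(t)] for all t ≥ t₀; in particular, the state transition mapping Φ_{t,t₀} of the linear system dy/dt = A_t y preserves the Lie bracket. (Appendix, Lemma on the supporting lemma of Proposition 1, property (ii).) -/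
attribute [local instance] Matrix.normedAddCommGroup Matrix.normedSpace

/-!
The defect `z t = y₀ t - [y₁ t, y₂ t]` solves the same linear equation `z' = A t z`: this is
exactly the derivation property of `A t`, applied to the product rule for the bracket. Since
`z t₀ = 0` and `A` is bounded on compact time intervals, uniqueness of solutions of the linear
ODE forces `z = 0` on `[t₀, ∞)`.
-/

section MatrixMul

variable {𝕜 : Type*} [NontriviallyNormedField 𝕜] [CompleteSpace 𝕜] {m : Type*} [Fintype m]

/- The sup norm on matrices is not submultiplicative, so `HasDerivAt.mul` does not apply;
matrix multiplication is used instead as a continuous bilinear map. -/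
variable (𝕜 m) in
noncomputable def matrixMulCLM : Matrix m m 𝕜 →L[𝕜] Matrix m m 𝕜 →L[𝕜] Matrix m m 𝕜 :=
  LinearMap.toContinuousLinearMap
    (LinearMap.toContinuousLinearMap.toLinearMap ∘ₗ LinearMap.mul 𝕜 (Matrix m m 𝕜))

variable {x y : 𝕜 → Matrix m m 𝕜} {x' y' : Matrix m m 𝕜} {t : 𝕜}

theorem HasDerivAt.matrix_mul_s7 (hx : HasDerivAt x x' t) (hy : HasDerivAt y y' t) :
    HasDerivAt (fun s ↦ x s * y s) (x t * y' + x' * y t) t :=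
  (matrixMulCLM 𝕜 m).hasDerivAt_of_bilinear (fun _ ↦ hx) (fun _ ↦ hy)

theorem HasDerivAt.matrix_commutator (hx : HasDerivAt x x' t) (hy : HasDerivAt y y' t) :
    HasDerivAt (fun s ↦ x s * y s - y s * x s)
      ((x' * y t - y t * x') + (x t * y' - y' * x t)) t :=
  ((hx.matrix_mul_s7 hy).sub (hy.matrix_mul_s7 hx)).congr_deriv (by abel)

end MatrixMul

theorem linear_ODE_solution_eq_zero {E : Type*} [NormedAddCommGroup E] [NormedSpace ℝ E]
    {A : ℝ → E →L[ℝ] E} {z : ℝ → E} {t₀ : ℝ} (hA : ContinuousOn A (Set.Ici t₀))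
    (hz : ∀ t, t₀ ≤ t → HasDerivAt z (A t (z t)) t) (hz₀ : z t₀ = 0) :
    ∀ t, t₀ ≤ t → z t = 0 := by
  intro T hT
  obtain ⟨C, hC⟩ := isCompact_Icc.exists_bound_of_continuousOn
    (hA.mono (Set.Icc_subset_Ici_self : Set.Icc t₀ T ⊆ _))
  have hlip : ∀ t ∈ Set.Ico t₀ T, LipschitzOnWith C.toNNReal (A t) Set.univ := fun t ht ↦
    have hbound := hC t (Set.Ico_subset_Icc_self ht)
    ((A t).lipschitz.weaken (NNReal.le_toNNReal_of_coe_le hbound)).lipschitzOnWith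
  exact ODE_solution_unique_of_mem_Icc_right (g := fun _ ↦ 0) hlip
    (fun t ht ↦ (hz t ht.1).continuousAt.continuousWithinAt)
    (fun t ht ↦ (hz t ht.1).hasDerivWithinAt) (fun _ _ ↦ trivial) continuousOn_const
    (fun t _ ↦ by simpa using hasDerivWithinAt_const t _ (0 : E)) (fun _ _ ↦ trivial)
    hz₀ ⟨hT, le_rfl⟩

theorem flow_preserves_bracket_general {n : ℕ}
    (𝔤 : Submodule ℝ (Matrix (Fin n) (Fin n) ℝ))
    (A : ℝ → Matrix (Fin n) (Fin n) ℝ →L[ℝ] Matrix (Fin n) (Fin n) ℝ)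
    (hA_cont : Continuous A)
    (hA_der : ∀ t : ℝ, ∀ y ∈ 𝔤, ∀ y' ∈ 𝔤,
      A t (y * y' - y' * y) =
        (A t y * y' - y' * A t y) + (y * A t y' - A t y' * y))
    (t₀ : ℝ) (y₀ y₁ y₂ : ℝ → Matrix (Fin n) (Fin n) ℝ)
    (hmem : ∀ t : ℝ, y₀ t ∈ 𝔤 ∧ y₁ t ∈ 𝔤 ∧ y₂ t ∈ 𝔤)
    (hderiv : ∀ t : ℝ, t₀ ≤ t →
      HasDerivAt y₀ (A t (y₀ t)) t ∧ HasDerivAt y₁ (A t (y₁ t)) t ∧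
        HasDerivAt y₂ (A t (y₂ t)) t)
    (hinit : y₀ t₀ = y₁ t₀ * y₂ t₀ - y₂ t₀ * y₁ t₀) :
    ∀ t : ℝ, t₀ ≤ t → y₀ t = y₁ t * y₂ t - y₂ t * y₁ t := by
  have hdefect : ∀ t, t₀ ≤ t → HasDerivAt (fun s ↦ y₀ s - (y₁ s * y₂ s - y₂ s * y₁ s))
      (A t (y₀ t - (y₁ t * y₂ t - y₂ t * y₁ t))) t := by
    intro t ht
    obtain ⟨h₀, h₁, h₂⟩ := hderiv t ht
    rw [map_sub, hA_der t _ (hmem t).2.1 _ (hmem t).2.2]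
    exact h₀.sub (h₁.matrix_commutator h₂)
  intro t ht
  exact sub_eq_zero.1
    (linear_ODE_solution_eq_zero hA_cont.continuousOn hdefect (sub_eq_zero.2 hinit) t ht)

/-- **Supporting lemma of Proposition 1 (Appendix), property (ii).** Let `𝔤` be a Lie
subalgebra of the `n × n` real matrices, `A t` a continuous-in-`t` family of continuous
linear endomorphisms preserving `𝔤`, each a derivation of the commutator on `𝔤`. If
`y₀, y₁, y₂` are differentiable curves in `𝔤` solving `dy/dt = A t (y t)` for `t ≥ t₀`
and `y₀ t₀ = [y₁ t₀, y₂ t₀]`, then `y₀ t = [y₁ t, y₂ t]` for all `t ≥ t₀`; that is, the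
state transition mapping of the linear system preserves the Lie bracket. -/
theorem flow_preserves_bracket {n : ℕ} (hn : 0 < n)
    (𝔤 : Submodule ℝ (Matrix (Fin n) (Fin n) ℝ))
    (h𝔤 : ∀ x ∈ 𝔤, ∀ y ∈ 𝔤, x * y - y * x ∈ 𝔤)
    (A : ℝ → Matrix (Fin n) (Fin n) ℝ →L[ℝ] Matrix (Fin n) (Fin n) ℝ)
    (hA_cont : Continuous A)
    (hA_preserve : ∀ t : ℝ, ∀ v ∈ 𝔤, A t v ∈ 𝔤)
    (hA_der : ∀ t : ℝ, ∀ y ∈ 𝔤, ∀ y' ∈ 𝔤,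
      A t (y * y' - y' * y) =
        (A t y * y' - y' * A t y) + (y * A t y' - A t y' * y))
    (t₀ : ℝ) (y₀ y₁ y₂ : ℝ → Matrix (Fin n) (Fin n) ℝ)
    (hmem : ∀ t : ℝ, y₀ t ∈ 𝔤 ∧ y₁ t ∈ 𝔤 ∧ y₂ t ∈ 𝔤)
    (hderiv : ∀ t : ℝ, t₀ ≤ t →
      HasDerivAt y₀ (A t (y₀ t)) t ∧ HasDerivAt y₁ (A t (y₁ t)) t ∧
        HasDerivAt y₂ (A t (y₂ t)) t)
    (hinit : y₀ t₀ = y₁ t₀ * y₂ t₀ - y₂ t₀ * y₁ t₀) :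
    ∀ t : ℝ, t₀ ≤ t → y₀ t = y₁ t * y₂ t - y₂ t * y₁ t :=
  flow_preserves_bracket_general 𝔤 A hA_cont hA_der t₀ y₀ y₁ y₂ hmem hderiv hinit
end

section
/- Let f : ℝ → (n×n real matrices → n×n real matrices) be such that f_t satisfies the affine group property on G for every t, and let w : ℝ → 𝔤 be a (smooth) disturbance. Suppose X, X̂ : ℝ → G are differentiable curves of invertible matrices with dX_t/dt = f_t(X_t) + X_t·w_t and dX̂_t/dt = f_t(X̂_t). Then the left-invariant error η_t := X̂_t⁻¹·X_t is differentiable and satisfies dη_t/dt = f_t(η_t) − f_t(I)·η_t + η_t·w_t. (Lemma 3, left-invariant case.) -/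
open NormedSpace

attribute [local instance] Matrix.normedAddCommGroup Matrix.normedSpace

theorem hasDerivAt_pi' {ι : Type*} [Fintype ι] {E : ι → Type*}
    [∀ i, NormedAddCommGroup (E i)] [∀ i, NormedSpace ℝ (E i)]
    {f : ℝ → ∀ i, E i} {f' : ∀ i, E i} {t : ℝ} :
    HasDerivAt f f' t ↔ ∀ i, HasDerivAt (fun s => f s i) (f' i) t := by
  simp only [hasDerivAt_iff_hasFDerivAt]
  rw [hasFDerivAt_pi']
  refine forall_congr' fun i => ?_
  have : (ContinuousLinearMap.proj (R := ℝ) (φ := E) i).comp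
      (ContinuousLinearMap.toSpanSingleton ℝ f') = ContinuousLinearMap.toSpanSingleton ℝ (f' i) := by
    ext
    simp
  rw [this]

theorem hasDerivAt_matrix {n : ℕ} {f : ℝ → Matrix (Fin n) (Fin n) ℝ}
    {f' : Matrix (Fin n) (Fin n) ℝ} {t : ℝ} :
    HasDerivAt f f' t ↔ ∀ i j, HasDerivAt (fun s => f s i j) (f' i j) t := by
  exact (hasDerivAt_pi' (f := f) (E := fun _ : Fin n => Fin n → ℝ)).trans
    (forall_congr' fun i => hasDerivAt_pi')

theorem HasDerivAt.matrix_mul_s8 {n : ℕ} {A B : ℝ → Matrix (Fin n) (Fin n) ℝ}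
    {A' B' : Matrix (Fin n) (Fin n) ℝ} {t : ℝ}
    (hA : HasDerivAt A A' t) (hB : HasDerivAt B B' t) :
    HasDerivAt (fun s => A s * B s) (A' * B t + A t * B') t := by
  rw [hasDerivAt_matrix] at hA hB ⊢
  intro i j
  have : ∀ s, (A s * B s) i j = ∑ k, A s i k * B s k j := fun s => Matrix.mul_apply
  simp only [this]
  have : (A' * B t + A t * B') i j = ∑ k, (A' i k * B t k j + A t i k * B' k j) := by
    simp [Matrix.mul_apply, Matrix.add_apply, Finset.sum_add_distrib]
  rw [this]
  exact HasDerivAt.fun_sum fun k _ => (hA i k).mul (hB k j)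

theorem DifferentiableAt.matrix_det {n : ℕ} {A : ℝ → Matrix (Fin n) (Fin n) ℝ}
    {A' : Matrix (Fin n) (Fin n) ℝ} {t : ℝ} (hA : HasDerivAt A A' t) :
    DifferentiableAt ℝ (fun s => (A s).det) t := by
  rw [hasDerivAt_matrix] at hA
  simp only [Matrix.det_apply, Units.smul_def, zsmul_eq_mul]
  refine DifferentiableAt.fun_sum fun σ _ => DifferentiableAt.const_mul ?_ _
  exact DifferentiableAt.fun_finsetProd fun i _ => (hA (σ i) i).differentiableAt

theorem hasDerivAt_updateRow {n : ℕ} {A : ℝ → Matrix (Fin n) (Fin n) ℝ}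
    {A' : Matrix (Fin n) (Fin n) ℝ} {t : ℝ} (hA : HasDerivAt A A' t)
    (j : Fin n) (r : Fin n → ℝ) :
    HasDerivAt (fun s => (A s).updateRow j r) (A'.updateRow j 0) t := by
  rw [hasDerivAt_matrix] at hA ⊢
  intro k l
  by_cases h : k = j
  · subst h
    simp only [Matrix.updateRow_self]
    exact hasDerivAt_const t (r l)
  · simp only [Matrix.updateRow_ne h]
    exact hA k l

theorem DifferentiableAt.matrix_inv {n : ℕ} {A : ℝ → Matrix (Fin n) (Fin n) ℝ}
    {A' : Matrix (Fin n) (Fin n) ℝ} {t : ℝ} (hA : HasDerivAt A A' t)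
    (hu : IsUnit (A t)) :
    DifferentiableAt ℝ (fun s => (A s)⁻¹) t := by
  have hdet : DifferentiableAt ℝ (fun s => (A s).det) t := DifferentiableAt.matrix_det hA
  have hdet0 : (A t).det ≠ 0 := by
    have := (Matrix.isUnit_iff_isUnit_det _).mp hu
    exact IsUnit.ne_zero this
  have hinv : DifferentiableAt ℝ (fun s => ((A s).det)⁻¹) t := hdet.inv hdet0
  have hadj : DifferentiableAt ℝ (fun s => (A s).adjugate) t := by
    have key : ∀ i j : Fin n, DifferentiableAt ℝ (fun s => (A s).adjugate i j) t := by
      intro i j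
      simp only [Matrix.adjugate_apply]
      exact DifferentiableAt.matrix_det ((hasDerivAt_updateRow hA j (Pi.single i 1)))
    obtain h := fun i j => (key i j).hasDerivAt
    exact (hasDerivAt_matrix.mpr (fun i j => h i j)).differentiableAt
  have : (fun s => (A s)⁻¹) = fun s => ((A s).det)⁻¹ • (A s).adjugate := by
    funext s
    rw [Matrix.inv_def, Ring.inverse_eq_inv']
  rw [this]
  exact hinv.smul hadj

/-- **Lemma 3, left-invariant case.** If `f t` satisfies the affine group property on
`G` for every `t`, `w` is a smooth disturbance with values in the Lie algebra of `G`,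
and `X`, `X̂` are curves in `G` with `dX/dt = f t (X t) + X t * w t` and
`dX̂/dt = f t (X̂ t)`, then the left-invariant error `η t = (X̂ t)⁻¹ * X t` is
differentiable with `dη/dt = f t (η t) - f t 1 * η t + η t * w t`. -/
theorem left_invariant_error_dynamics {n : ℕ} (hn : 0 < n)
    (G : Set (Matrix (Fin n) (Fin n) ℝ)) (hG : IsMatrixLieGroup G)
    (f : ℝ → Matrix (Fin n) (Fin n) ℝ → Matrix (Fin n) (Fin n) ℝ)
    (hf : ∀ t : ℝ, AffineGroupProp G (f t))
    (w : ℝ → Matrix (Fin n) (Fin n) ℝ)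
    (hw_mem : ∀ t : ℝ, w t ∈ lieAlgebraOf G)
    (hw_smooth : ContDiff ℝ (⊤ : ℕ∞) w)
    (X Xhat : ℝ → Matrix (Fin n) (Fin n) ℝ)
    (hX_mem : ∀ t : ℝ, X t ∈ G) (hXhat_mem : ∀ t : ℝ, Xhat t ∈ G)
    (hX_unit : ∀ t : ℝ, IsUnit (X t)) (hXhat_unit : ∀ t : ℝ, IsUnit (Xhat t))
    (hX_deriv : ∀ t : ℝ, HasDerivAt X (f t (X t) + X t * w t) t)
    (hXhat_deriv : ∀ t : ℝ, HasDerivAt Xhat (f t (Xhat t)) t) :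
    ∀ t : ℝ, HasDerivAt (fun s => (Xhat s)⁻¹ * X s)
      (f t ((Xhat t)⁻¹ * X t) - f t 1 * ((Xhat t)⁻¹ * X t)
        + ((Xhat t)⁻¹ * X t) * w t) t := by
  intro t
  set g : ℝ → Matrix (Fin n) (Fin n) ℝ := fun s => (Xhat s)⁻¹ with hg_def
  have hinvmul : ∀ s, g s * Xhat s = 1 := fun s =>
    Matrix.nonsing_inv_mul _ ((Matrix.isUnit_iff_isUnit_det _).mp (hXhat_unit s))
  have hmulinv : ∀ s, Xhat s * g s = 1 := fun s =>
    Matrix.mul_nonsing_inv _ ((Matrix.isUnit_iff_isUnit_det _).mp (hXhat_unit s))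
  have hg : HasDerivAt g (deriv g t) t :=
    (DifferentiableAt.matrix_inv (hXhat_deriv t) (hXhat_unit t)).hasDerivAt
  set g' := deriv g t with hg'_def
  have h1 : HasDerivAt (fun s => Xhat s * g s) (f t (Xhat t) * g t + Xhat t * g') t :=
    (hXhat_deriv t).matrix_mul_s8 hg
  have h1' : HasDerivAt (fun s => Xhat s * g s) 0 t := by
    have : (fun s => Xhat s * g s) = fun _ => (1 : Matrix (Fin n) (Fin n) ℝ) :=
      funext hmulinv
    rw [this]
    exact hasDerivAt_const t 1
  have hzero : f t (Xhat t) * g t + Xhat t * g' = 0 := h1.unique h1'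
  have hg' : g' = -(g t * f t (Xhat t) * g t) := by
    have h2 : g t * (f t (Xhat t) * g t + Xhat t * g') = 0 := by rw [hzero, mul_zero]
    rw [mul_add, ← mul_assoc, ← mul_assoc, hinvmul t, one_mul] at h2
    exact eq_neg_of_add_eq_zero_right h2
  have hη : HasDerivAt (fun s => g s * X s)
      (g' * X t + g t * (f t (X t) + X t * w t)) t := hg.matrix_mul_s8 (hX_deriv t)
  have hmem : g t * X t ∈ G := hG.mul_mem (hG.inv_mem (hXhat_mem t)) (hX_mem t)
  have hXfac : X t = Xhat t * (g t * X t) := by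
    rw [← mul_assoc, hmulinv t, one_mul]
  have hexp : f t (X t) = f t (Xhat t) * (g t * X t) + Xhat t * f t (g t * X t)
      - Xhat t * f t 1 * (g t * X t) := by
    conv_lhs => rw [hXfac]
    exact hf t (Xhat t) (hXhat_mem t) _ hmem
  have key : f t (g t * X t) - f t 1 * (g t * X t) + (g t * X t) * w t
      = g' * X t + g t * (f t (X t) + X t * w t) := by
    rw [hg', hexp]
    simp only [mul_add, mul_sub, neg_mul, ← mul_assoc, hinvmul t, one_mul]
    abel
  rw [key]
  exact hη
end

section
/- Let ξ ∈ 𝔰𝔢_N(3) with rotational block S (the top-left 3×3 skew-symmetric block of ξ) and let θ ≥ 0 be defined by θ² = (1/2)·tr(Sᵀ S) (so θ = ‖ω‖ for the rotation vector ω with ω^∧ = S). Then the adjoint operator ad_ξ satisfies the polynomial identity ad_ξ⁵(η) + 2θ²·ad_ξ³(η) + θ⁴·ad_ξ(η) = 0 for every η ∈ 𝔰𝔢_N(3). -/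
/-- The adjoint operator `ad_ξ : η ↦ ξ*η - η*ξ` on `d × d` real matrices. -/
noncomputable def adM {d : ℕ} (x : Matrix (Fin d) (Fin d) ℝ) :
    Module.End ℝ (Matrix (Fin d) (Fin d) ℝ) :=
  LinearMap.mulLeft ℝ x - LinearMap.mulRight ℝ x

/-- Membership in the Lie algebra `𝔰𝔢_N(3)`: a `(3+N) × (3+N)` real matrix whose last
`N` rows vanish and whose top-left `3 × 3` block is skew-symmetric. -/
def mem_seN (N : ℕ) (ξ : Matrix (Fin (3 + N)) (Fin (3 + N)) ℝ) : Prop :=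
  (∀ i j : Fin (3 + N), 3 ≤ (i : ℕ) → ξ i j = 0) ∧
  (∀ i j : Fin (3 + N), (i : ℕ) < 3 → (j : ℕ) < 3 → ξ j i = - ξ i j)

/-- The rotational block `S`: the top-left `3 × 3` block of `ξ`. -/
def rotBlock (N : ℕ) (ξ : Matrix (Fin (3 + N)) (Fin (3 + N)) ℝ) :
    Matrix (Fin 3) (Fin 3) ℝ :=
  ξ.submatrix (Fin.castAdd N) (Fin.castAdd N)

/-!
Write `ω`, `a` for the rotation vectors of `ξ`, `η` and `v_j`, `b_j` for the top parts of their
`j`-th columns. Then `ad_ξ η` has rotation vector `ω × a` and columns `ω × b_j - a × v_j`, so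
the whole identity reduces to vector algebra in `ℝ³`. With `t = |ω|²`, the triple product
expansion gives `ω × (ω × x) + t x = (ω · x) ω`. Hence, along the orbit `a_k, b_k` of `ad_ξ`,
`a_{k+2} + t a_k` is parallel to `ω` for `k = 0` and vanishes for `k ≥ 1`, so
`u_k = b_{k+2} + t b_k` satisfies `u_{k+1} = ω × u_k` for `k ≥ 1` and `u_1 ⊥ ω`. The quintic
expression is `u_3 + t u_1 = ω × (ω × u_1) + t u_1 = (ω · u_1) ω = 0`.
-/

open Matrix

section CrossProduct

variable {R : Type*} [CommRing R]

theorem cross_cross_self_add_smul (ω x : Fin 3 → R) :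
    ω ⨯₃ (ω ⨯₃ x) + (ω ⬝ᵥ ω) • x = (ω ⬝ᵥ x) • ω := by
  rw [cross_cross_eq_smul_sub_smul', sub_add_cancel]

theorem quintic_of_cross_recurrence {ω v : Fin 3 → R} {a b : ℕ → Fin 3 → R}
    (ha : ∀ k, a (k + 1) = ω ⨯₃ a k) (hb : ∀ k, b (k + 1) = ω ⨯₃ b k - a k ⨯₃ v) :
    b 5 + (2 * (ω ⬝ᵥ ω)) • b 3 + (ω ⬝ᵥ ω) ^ 2 • b 1 = 0 := by
  set t := ω ⬝ᵥ ω
  have ha2 : a 2 + t • a 0 = (ω ⬝ᵥ a 0) • ω := by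
    rw [ha, ha, cross_cross_self_add_smul]
  have ha3 : a 3 + t • a 1 = 0 := by
    rw [ha 2, ha 0, ← map_smul, ← map_add, ha2, map_smul, cross_self, smul_zero]
  have ha4 : a 4 + t • a 2 = 0 := by
    rw [ha 3, ha 1, ← map_smul, ← map_add, ha3, map_zero]
  set u : ℕ → Fin 3 → R := fun k => b (k + 2) + t • b k with hu_def
  have hu : ∀ k, u (k + 1) = ω ⨯₃ u k - (a (k + 2) + t • a k) ⨯₃ v := by
    intro k
    simp only [hu_def, hb, map_add, map_smul, map_sub, LinearMap.add_apply, LinearMap.smul_apply]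
    module
  have hu1 : ω ⬝ᵥ u 1 = 0 := by
    rw [hu 0, ha2, dotProduct_sub, dot_self_cross, map_smul, LinearMap.smul_apply,
      dotProduct_smul, dot_self_cross, smul_zero, sub_zero]
  have hu3 : u 3 = ω ⨯₃ (ω ⨯₃ u 1) := by
    rw [hu 2, ha4, hu 1, ha3]
    simp
  calc b 5 + (2 * t) • b 3 + t ^ 2 • b 1 = u 3 + t • u 1 := by simp only [hu_def]; module
    _ = (ω ⬝ᵥ u 1) • ω := by rw [hu3, cross_cross_self_add_smul]
    _ = 0 := by rw [hu1, zero_smul]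

def hat (u : Fin 3 → R) : Matrix (Fin 3) (Fin 3) R :=
  !![0, -u 2, u 1; u 2, 0, -u 0; -u 1, u 0, 0]

def vee (S : Matrix (Fin 3) (Fin 3) R) : Fin 3 → R :=
  ![S 2 1, S 0 2, S 1 0]

theorem hat_vee {S : Matrix (Fin 3) (Fin 3) ℝ} (hS : Sᵀ = -S) : hat (vee S) = S := by
  have h : ∀ i j, S j i = -S i j := fun i j => congrFun (congrFun hS i) j
  ext i j
  fin_cases i <;> fin_cases j <;> simp [hat, vee] <;>
    linarith [h 0 0, h 1 1, h 2 2, h 0 1, h 0 2, h 1 2]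

theorem hat_mulVec (u v : Fin 3 → R) : hat u *ᵥ v = u ⨯₃ v := by
  ext i
  fin_cases i <;> simp [hat, cross_apply, mulVec, dotProduct, Fin.sum_univ_three] <;> ring

theorem vee_hat_mul_sub (u v : Fin 3 → R) : vee (hat u * hat v - hat v * hat u) = u ⨯₃ v := by
  ext i
  fin_cases i <;> simp [hat, vee, cross_apply] <;> ring

theorem trace_transpose_hat_mul_hat (u : Fin 3 → R) :
    trace ((hat u)ᵀ * hat u) = 2 * (u ⬝ᵥ u) := by
  simp [hat, trace, mul_apply, Fin.sum_univ_three, dotProduct]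
  ring

theorem transpose_mul_sub_mul_of_skew {n : Type*} [Fintype n]
    {S T : Matrix n n R} (hS : Sᵀ = -S) (hT : Tᵀ = -T) :
    (S * T - T * S)ᵀ = -(S * T - T * S) := by
  rw [transpose_sub, transpose_mul, transpose_mul, hS, hT]
  noncomm_ring

end CrossProduct

theorem adM_apply {d : ℕ} (x y : Matrix (Fin d) (Fin d) ℝ) : adM x y = x * y - y * x := rfl

section SeN

variable {N : ℕ}

def seN (N : ℕ) : Submodule ℝ (Matrix (Fin (3 + N)) (Fin (3 + N)) ℝ) where
  carrier := {ξ | mem_seN N ξ}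
  add_mem' {ξ η} hξ hη :=
    ⟨fun i j hi => by simp [hξ.1 i j hi, hη.1 i j hi],
      fun i j hi hj => by simp [hξ.2 i j hi hj, hη.2 i j hi hj]; ring⟩
  zero_mem' := ⟨fun _ _ _ => rfl, fun _ _ _ _ => by simp⟩
  smul_mem' c ξ hξ :=
    ⟨fun i j hi => by simp [hξ.1 i j hi], fun i j hi hj => by simp [hξ.2 i j hi hj]⟩

def topCol (N : ℕ) (x : Matrix (Fin (3 + N)) (Fin (3 + N)) ℝ) (j : Fin (3 + N)) : Fin 3 → ℝ :=
  fun i => x (Fin.castAdd N i) j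

theorem topCol_add (x y : Matrix (Fin (3 + N)) (Fin (3 + N)) ℝ) (j : Fin (3 + N)) :
    topCol N (x + y) j = topCol N x j + topCol N y j := rfl

theorem topCol_smul (c : ℝ) (x : Matrix (Fin (3 + N)) (Fin (3 + N)) ℝ) (j : Fin (3 + N)) :
    topCol N (c • x) j = c • topCol N x j := rfl

def rotVec (N : ℕ) (x : Matrix (Fin (3 + N)) (Fin (3 + N)) ℝ) : Fin 3 → ℝ :=
  vee (rotBlock N x)

theorem transpose_rotBlock {ξ : Matrix (Fin (3 + N)) (Fin (3 + N)) ℝ} (hξ : mem_seN N ξ) :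
    (rotBlock N ξ)ᵀ = -rotBlock N ξ := by
  ext i j
  exact hξ.2 _ _ (Fin.castAdd_lt N i) (Fin.castAdd_lt N j)

theorem rotBlock_eq_hat {ξ : Matrix (Fin (3 + N)) (Fin (3 + N)) ℝ} (hξ : mem_seN N ξ) :
    rotBlock N ξ = hat (rotVec N ξ) :=
  (hat_vee (transpose_rotBlock hξ)).symm

theorem topCol_mul (ξ : Matrix (Fin (3 + N)) (Fin (3 + N)) ℝ)
    {η : Matrix (Fin (3 + N)) (Fin (3 + N)) ℝ} (hη : mem_seN N η) (j : Fin (3 + N)) :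
    topCol N (ξ * η) j = rotBlock N ξ *ᵥ topCol N η j := by
  ext i
  simp only [topCol, mul_apply, mulVec, dotProduct, rotBlock, submatrix_apply, Fin.sum_univ_add]
  have hlow : ∀ k : Fin N, η (Fin.natAdd 3 k) j = 0 := fun k => hη.1 _ j (by simp)
  simp [hlow]

theorem rotBlock_mul (ξ : Matrix (Fin (3 + N)) (Fin (3 + N)) ℝ)
    {η : Matrix (Fin (3 + N)) (Fin (3 + N)) ℝ} (hη : mem_seN N η) :
    rotBlock N (ξ * η) = rotBlock N ξ * rotBlock N η := by
  ext i m
  exact congrFun (topCol_mul ξ hη (Fin.castAdd N m)) i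

variable {ξ η : Matrix (Fin (3 + N)) (Fin (3 + N)) ℝ}

theorem rotBlock_adM (hξ : mem_seN N ξ) (hη : mem_seN N η) :
    rotBlock N (adM ξ η) = rotBlock N ξ * rotBlock N η - rotBlock N η * rotBlock N ξ := by
  change rotBlock N (ξ * η) - rotBlock N (η * ξ) = _
  rw [rotBlock_mul ξ hη, rotBlock_mul η hξ]

theorem mem_seN_adM (hξ : mem_seN N ξ) (hη : mem_seN N η) : mem_seN N (adM ξ η) := by
  refine ⟨fun i j hi => ?_, fun i j hi hj => ?_⟩
  · simp [adM_apply, mul_apply, hξ.1 i _ hi, hη.1 i _ hi]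
  · have hskew : (rotBlock N (adM ξ η))ᵀ = -rotBlock N (adM ξ η) := by
      rw [rotBlock_adM hξ hη]
      exact transpose_mul_sub_mul_of_skew (transpose_rotBlock hξ) (transpose_rotBlock hη)
    rw [← Fin.castAdd_castLT N i hi, ← Fin.castAdd_castLT N j hj]
    exact congrFun (congrFun hskew _) _

theorem rotVec_adM (hξ : mem_seN N ξ) (hη : mem_seN N η) :
    rotVec N (adM ξ η) = rotVec N ξ ⨯₃ rotVec N η := by
  rw [rotVec, rotBlock_adM hξ hη, rotBlock_eq_hat hξ, rotBlock_eq_hat hη, vee_hat_mul_sub]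

theorem topCol_adM (hξ : mem_seN N ξ) (hη : mem_seN N η) (j : Fin (3 + N)) :
    topCol N (adM ξ η) j = rotVec N ξ ⨯₃ topCol N η j - rotVec N η ⨯₃ topCol N ξ j := by
  rw [← hat_mulVec, ← hat_mulVec, ← rotBlock_eq_hat hξ, ← rotBlock_eq_hat hη, ← topCol_mul ξ hη,
    ← topCol_mul η hξ, adM_apply]
  rfl

theorem eq_zero_of_topCol_eq_zero {μ : Matrix (Fin (3 + N)) (Fin (3 + N)) ℝ}
    (hμ : mem_seN N μ) (h : ∀ j, topCol N μ j = 0) : μ = 0 := by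
  ext i j
  rcases lt_or_ge (i : ℕ) 3 with hi | hi
  · rw [← Fin.castAdd_castLT N i hi]
    exact congrFun (h j) _
  · exact hμ.1 i j hi

end SeN

theorem ad_quintic_identity_seN_general (N : ℕ) (ξ : Matrix (Fin (3 + N)) (Fin (3 + N)) ℝ)
    (hξ : mem_seN N ξ) (θ : ℝ)
    (hθ_sq : θ ^ 2 = (1 / 2) * Matrix.trace ((rotBlock N ξ).transpose * rotBlock N ξ)) :
    ∀ η : Matrix (Fin (3 + N)) (Fin (3 + N)) ℝ, mem_seN N η →
      (adM ξ ^ 5) η + (2 * θ ^ 2) • ((adM ξ ^ 3) η) + θ ^ 4 • (adM ξ η) = 0 := by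
  intro η hη
  have hθ : θ ^ 2 = rotVec N ξ ⬝ᵥ rotVec N ξ := by
    rw [hθ_sq, rotBlock_eq_hat hξ, trace_transpose_hat_mul_hat]
    ring
  have hpow : ∀ k, (adM ξ ^ (k + 1)) η = adM ξ ((adM ξ ^ k) η) := fun k => by
    rw [pow_succ', Module.End.mul_apply]
  have hmem : ∀ k, (adM ξ ^ k) η ∈ seN N := by
    intro k
    induction k with
    | zero => exact hη
    | succ k ih => rw [hpow]; exact mem_seN_adM hξ ih
  refine eq_zero_of_topCol_eq_zero ((seN N).add_mem ((seN N).add_mem (hmem 5)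
    ((seN N).smul_mem _ (hmem 3))) ((seN N).smul_mem _ (hmem 1))) fun j => ?_
  have := quintic_of_cross_recurrence (ω := rotVec N ξ) (v := topCol N ξ j)
    (a := fun k => rotVec N ((adM ξ ^ k) η)) (b := fun k => topCol N ((adM ξ ^ k) η) j)
    (fun k => by simp only [hpow, rotVec_adM hξ (hmem k)])
    (fun k => by simp only [hpow, topCol_adM hξ (hmem k)])
  rw [show θ ^ 4 = (θ ^ 2) ^ 2 by ring, hθ]
  simpa [topCol_add, topCol_smul] using this

/-- **Characteristic polynomial identity for `ad_ξ` on `𝔰𝔢_N(3)`.** For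
`ξ ∈ 𝔰𝔢_N(3)` with rotational block `S` and `θ ≥ 0` with `θ² = (1/2)·tr(Sᵀ S)`, one
has `ad_ξ⁵ η + 2θ²·ad_ξ³ η + θ⁴·ad_ξ η = 0` for every `η ∈ 𝔰𝔢_N(3)`. -/
theorem ad_quintic_identity_seN (N : ℕ) (ξ : Matrix (Fin (3 + N)) (Fin (3 + N)) ℝ)
    (hξ : mem_seN N ξ) (θ : ℝ) (hθ : 0 ≤ θ)
    (hθ_sq : θ ^ 2 = (1 / 2) * Matrix.trace ((rotBlock N ξ).transpose * rotBlock N ξ)) :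
    ∀ η : Matrix (Fin (3 + N)) (Fin (3 + N)) ℝ, mem_seN N η →
      (adM ξ ^ 5) η + (2 * θ ^ 2) • ((adM ξ ^ 3) η) + θ ^ 4 • (adM ξ η) = 0 :=
  ad_quintic_identity_seN_general N ξ hξ θ hθ_sq
end

section
/- Let ξ ∈ 𝔰𝔢_N(3) with rotational block S (the top-left 3×3 skew-symmetric block of ξ) and let θ > 0 be defined by θ² = (1/2)·tr(Sᵀ S). Define β₁ = (4cos θ − 4 + θ sin θ)/(2θ²), β₂ = (4θ − 5 sin θ + θ cos θ)/(2θ³), β₃ = (θ sin θ + 2cos θ − 2)/(2θ⁴), and β₄ = (2θ − 3 sin θ + θ cos θ)/(2θ⁵). Then the right Jacobian dexp(−ξ) admits the closed form: for every η ∈ 𝔰𝔢_N(3), ∑_{i=0}^∞ ((−1)^i/(i+1)!)·ad_ξ^i(η) = η + β₁·ad_ξ(η) + β₂·ad_ξ²(η) + β₃·ad_ξ³(η) + β₄·ad_ξ⁴(η). (Proposition 4, equation for dexp(−ξ) on SE_N(3).) -/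
/-!
For `ξ ∈ 𝔰𝔢_N(3)` with rotational block `S = ω^∧`, the double cross product formula gives
`S³ = -θ² S` and `ad_S² T = ⟨ω, τ⟩ S - θ² T` for `T = τ^∧`. In block form these show that for
`A = ad_ξ` and `η ∈ 𝔰𝔢_N(3)`, `(A³ + θ² A) η` is a pure translation with columns in the range
of `S`, and `A² + θ²` kills such translations; so `A` is annihilated on `𝔰𝔢_N(3)` by
`x (x² + θ²)²`. Hence on `A η` and on `A² η` the operator `A²` acts as a single Jordan block
with eigenvalue `-θ²`, so `A^(2k+m) η` is explicit for `m = 1, 2`, and the series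
`∑ (-1)^i / (i+1)! • A^i η` splits into scalar series in `θ²`, all of which are rearrangements
of the series of `sin` and `cos`.
-/

open scoped Nat

open Matrix LieAlgebra

attribute [local instance] LieRing.ofAssociativeRing

section ScalarSeries

variable {x a b : ℝ} {m : ℕ}

theorem hasSum_pow_div_factorial_add_two (hx : x ≠ 0)
    (h : HasSum (fun k : ℕ => x ^ k / (2 * k + m)!) a) :
    HasSum (fun k : ℕ => x ^ k / (2 * k + m + 2)!) ((a - 1 / m !) / x) := by
  have h1 := ((hasSum_nat_add_iff' 1).mpr h).div_const x
  rw [Finset.sum_range_one, pow_zero, mul_zero, zero_add] at h1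
  refine h1.congr_fun fun k => ?_
  rw [show 2 * (k + 1) + m = 2 * k + m + 2 by ring, pow_succ]
  field_simp

theorem hasSum_mul_pow_pred_div_factorial (hx : x ≠ 0)
    (ha : HasSum (fun k : ℕ => x ^ k / (2 * k + m)!) a)
    (hb : HasSum (fun k : ℕ => x ^ k / (2 * k + m + 1)!) b) :
    HasSum (fun k : ℕ => k * x ^ (k - 1) / (2 * k + m + 1)!) ((a - (m + 1) * b) / (2 * x)) := by
  refine ((ha.sub (hb.mul_left ((m : ℝ) + 1))).div_const (2 * x)).congr_fun fun k => ?_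
  rw [Nat.factorial_succ]
  rcases k with _ | k
  · field_simp
    push_cast
    ring
  · rw [Nat.add_sub_cancel, pow_succ]
    push_cast
    field_simp
    ring

-- The index `2 * k + 0` lets this feed `hasSum_pow_div_factorial_add_two` at `m = 0`.
theorem Real.hasSum_neg_sq_pow_div_factorial (θ : ℝ) :
    HasSum (fun k : ℕ => (-θ ^ 2) ^ k / (2 * k + 0)!) (Real.cos θ) :=
  (Real.hasSum_cos θ).congr_fun fun k => by rw [neg_pow, pow_mul]; rfl

theorem Real.hasSum_neg_sq_pow_div_factorial_add_one {θ : ℝ} (hθ : θ ≠ 0) :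
    HasSum (fun k : ℕ => (-θ ^ 2) ^ k / (2 * k + 1)!) (Real.sin θ / θ) :=
  ((Real.hasSum_sin θ).div_const θ).congr_fun fun k => by
    rw [neg_pow, ← pow_mul, pow_succ]
    field_simp

end ScalarSeries

theorem HasSum.of_odd_add_even {M : Type*} [AddCommGroup M] [TopologicalSpace M]
    [IsTopologicalAddGroup M] {f : ℕ → M} {a b : M} (ha : HasSum (fun k => f (2 * k + 1)) a)
    (hb : HasSum (fun k => f (2 * k + 1 + 1)) b) : HasSum f (f 0 + a + b) := by
  have h := (hasSum_nat_add_iff 1).mp (HasSum.even_add_odd (f := fun k => f (k + 1)) ha hb)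
  rwa [Finset.sum_range_one, add_comm, ← add_assoc] at h

namespace Module.End

theorem pow_apply_of_apply_eq_smul_add {R M : Type*} [CommRing R] [AddCommGroup M] [Module R M]
    {B : Module.End R M} {v z : M} {x : R} (hv : B v = x • v + z) (hz : B z = x • z) (k : ℕ) :
    (B ^ k) v = x ^ k • v + (k * x ^ (k - 1)) • z := by
  induction k with
  | zero => simp
  | succ k ih =>
    rw [pow_succ', mul_apply, ih, map_add, map_smul, map_smul, hv, hz]
    rcases k with _ | k
    · simp
    · simp only [Nat.add_sub_cancel, smul_add, smul_smul]
      push_cast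
      module

theorem hasSum_inv_smul_pow_apply_of_apply_eq_smul_add {𝕜 M : Type*} [Field 𝕜]
    [TopologicalSpace 𝕜] [AddCommGroup M] [Module 𝕜 M] [TopologicalSpace M]
    [IsTopologicalAddGroup M] [ContinuousSMul 𝕜 M] {B : Module.End 𝕜 M} {v z : M} {x : 𝕜}
    (hv : B v = x • v + z) (hz : B z = x • z) {c : ℕ → 𝕜} {a b : 𝕜}
    (ha : HasSum (fun k => x ^ k / c k) a) (hb : HasSum (fun k => k * x ^ (k - 1) / c k) b) :
    HasSum (fun k => (c k)⁻¹ • (B ^ k) v) (a • v + b • z) :=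
  ((ha.smul_const v).add (hb.smul_const z)).congr_fun fun k => by
    rw [pow_apply_of_apply_eq_smul_add hv hz, smul_add, smul_smul, smul_smul, div_eq_inv_mul,
      div_eq_inv_mul]

theorem hasSum_dexp_neg_apply_of_quintic {M : Type*} [AddCommGroup M] [Module ℝ M]
    [TopologicalSpace M] [IsTopologicalAddGroup M] [ContinuousSMul ℝ M]
    {A : Module.End ℝ M} {η : M} {θ : ℝ} (hθ : θ ≠ 0)
    (h : (A ^ 5) η + (2 * θ ^ 2) • (A ^ 3) η + (θ ^ 2) ^ 2 • A η = 0) :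
    HasSum (fun i : ℕ => ((-1 : ℝ) ^ i / (i + 1)!) • (A ^ i) η)
      (η + ((4 * Real.cos θ - 4 + θ * Real.sin θ) / (2 * θ ^ 2)) • A η
        + ((4 * θ - 5 * Real.sin θ + θ * Real.cos θ) / (2 * θ ^ 3)) • (A ^ 2) η
        + ((θ * Real.sin θ + 2 * Real.cos θ - 2) / (2 * θ ^ 4)) • (A ^ 3) η
        + ((2 * θ - 3 * Real.sin θ + θ * Real.cos θ) / (2 * θ ^ 5)) • (A ^ 4) η) := by
  rw [show A η = (A ^ 1) η by rw [pow_one]] at h ⊢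
  set x : ℝ := -θ ^ 2 with hx_def
  have hx : x ≠ 0 := by simpa [hx_def] using hθ
  have pow_apply_pow (i j : ℕ) : (A ^ i) ((A ^ j) η) = (A ^ (i + j)) η := by
    rw [← mul_apply, ← pow_add]
  let z (j : ℕ) : M := (A ^ (j + 3)) η + θ ^ 2 • (A ^ (j + 1)) η
  have hv (j : ℕ) : (A ^ 2) ((A ^ (j + 1)) η) = x • (A ^ (j + 1)) η + z j := by
    simp only [z, pow_apply_pow, hx_def]
    rw [show 2 + (j + 1) = j + 3 by ring]
    module
  have hz (j : ℕ) : (A ^ 2) (z j) = x • z j := by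
    have hj := congrArg (A ^ j) h
    simp only [map_add, map_smul, map_zero, pow_apply_pow] at hj
    simp only [z, map_add, map_smul, pow_apply_pow, hx_def]
    rw [show 2 + (j + 3) = j + 5 by ring, show 2 + (j + 1) = j + 3 by ring]
    linear_combination (norm := module) hj
  have hpow (j k : ℕ) : ((A ^ 2) ^ k) ((A ^ (j + 1)) η) = (A ^ (2 * k + (j + 1))) η := by
    rw [← pow_mul, pow_apply_pow]
  have hcos := Real.hasSum_neg_sq_pow_div_factorial θ
  have hsin := Real.hasSum_neg_sq_pow_div_factorial_add_one hθ
  have hcos₂ := hasSum_pow_div_factorial_add_two hx hcos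
  have hsin₂ := hasSum_pow_div_factorial_add_two hx hsin
  have hodd : HasSum (fun k : ℕ =>
      ((-1 : ℝ) ^ (2 * k + 1) / (2 * k + 1 + 1)!) • (A ^ (2 * k + 1)) η) _ :=
    (hasSum_inv_smul_pow_apply_of_apply_eq_smul_add (hv 0) (hz 0) hcos₂
      (hasSum_mul_pow_pred_div_factorial (m := 1) hx hsin hcos₂)).neg.congr_fun fun k => by
        rw [hpow, pow_succ, pow_mul, neg_one_sq, one_pow, one_mul, neg_div, one_div, neg_smul]
  have heven : HasSum (fun k : ℕ =>
      ((-1 : ℝ) ^ (2 * k + 1 + 1) / (2 * k + 1 + 1 + 1)!) • (A ^ (2 * k + 1 + 1)) η) _ :=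
    (hasSum_inv_smul_pow_apply_of_apply_eq_smul_add (hv 1) (hz 1) hsin₂
      (hasSum_mul_pow_pred_div_factorial (m := 2) hx hcos₂ hsin₂)).congr_fun fun k => by
        rw [hpow, show 2 * k + (1 + 1) = 2 * k + 1 + 1 from rfl, pow_succ, pow_succ, pow_mul,
          neg_one_sq, one_pow, one_mul, neg_one_mul, neg_neg, one_div]
  convert (hodd.of_odd_add_even (f := fun i : ℕ => ((-1 : ℝ) ^ i / (i + 1)!) • (A ^ i) η)
    heven) using 1
  simp only [z, Nat.reduceAdd, hx_def, pow_zero, zero_add, Nat.factorial_zero, Nat.factorial_one,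
    Nat.cast_one, div_one, one_apply, one_smul]
  match_scalars <;> field_simp <;> ring

end Module.End

namespace Matrix

section SkewSymmetricThree

variable {S T : Matrix (Fin 3) (Fin 3) ℝ}

theorem exists_eq_of_transpose_eq_neg (hS : Sᵀ = -S) :
    ∃ a b c : ℝ, S = !![0, a, b; -a, 0, c; -b, -c, 0] := by
  refine ⟨S 0 1, S 0 2, S 1 2, ?_⟩
  have h i j : S j i = -S i j := by simpa using congrFun₂ hS i j
  ext i j
  fin_cases i <;> fin_cases j <;> simp [h 1 0, h 2 0, h 2 1] <;> linarith [h 0 0, h 1 1, h 2 2]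

theorem mul_self_mul_self_of_transpose_eq_neg (hS : Sᵀ = -S) :
    S * S * S = -((1 / 2) * trace (Sᵀ * S)) • S := by
  obtain ⟨a, b, c, rfl⟩ := exists_eq_of_transpose_eq_neg hS
  ext i j
  fin_cases i <;> fin_cases j <;> simp [mul_apply, Fin.sum_univ_three, trace_fin_three] <;> ring

theorem lie_lie_of_transpose_eq_neg (hS : Sᵀ = -S) (hT : Tᵀ = -T) :
    ⁅S, ⁅S, T⁆⁆ = ((1 / 2) * trace (Sᵀ * T)) • S - ((1 / 2) * trace (Sᵀ * S)) • T := by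
  obtain ⟨a, b, c, rfl⟩ := exists_eq_of_transpose_eq_neg hS
  obtain ⟨p, q, r, rfl⟩ := exists_eq_of_transpose_eq_neg hT
  ext i j
  fin_cases i <;> fin_cases j <;>
    simp [Ring.lie_def, mul_apply, Fin.sum_univ_three, trace_fin_three] <;> ring

end SkewSymmetricThree

theorem lie_fromBlocks_zero_zero {R l n : Type*} [CommRing R] [Fintype l] [Fintype n]
    [DecidableEq l] [DecidableEq n] (S T : Matrix l l R) (V W : Matrix l n R) :
    ⁅(fromBlocks S V 0 0 : Matrix (l ⊕ n) (l ⊕ n) R), fromBlocks T W 0 0⁆ =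
      (fromBlocks ⁅S, T⁆ (S * W - T * V) 0 0 : Matrix (l ⊕ n) (l ⊕ n) R) := by
  simp [Ring.lie_def, fromBlocks_multiply, sub_eq_add_neg, fromBlocks_neg, fromBlocks_add]

section SpecialEuclideanBlocks

variable {n : Type*} [Fintype n] [DecidableEq n] {S T : Matrix (Fin 3) (Fin 3) ℝ}
  {V W : Matrix (Fin 3) n ℝ} {c : ℝ}

local notation "adX" => ad ℝ (Matrix (Fin 3 ⊕ n) (Fin 3 ⊕ n) ℝ) (fromBlocks S V 0 0)

theorem exists_ad_pow_three_add_smul_ad_fromBlocks (hS : Sᵀ = -S) (hT : Tᵀ = -T)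
    (hc : c = (1 / 2) * trace (Sᵀ * S)) :
    ∃ U : Matrix (Fin 3) n ℝ, (adX ^ 3) (fromBlocks T W 0 0) + c • adX (fromBlocks T W 0 0)
      = fromBlocks 0 (S * U) 0 0 := by
  set k := (1 / 2) * trace (Sᵀ * T)
  have hS3 : S * S * S = -c • S := hc ▸ mul_self_mul_self_of_transpose_eq_neg hS
  have hST : ⁅S, ⁅S, T⁆⁆ = k • S - c • T := hc ▸ lie_lie_of_transpose_eq_neg hS hT
  refine ⟨-((S * T + ⁅S, T⁆ + k • 1) * V), ?_⟩
  simp only [pow_succ, pow_zero, one_mul, Module.End.mul_apply, ad_apply,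
    lie_fromBlocks_zero_zero, fromBlocks_smul, fromBlocks_add, smul_zero, add_zero]
  congr 1
  · rw [hST, lie_sub, lie_smul, lie_smul, lie_self, smul_zero, zero_sub, neg_add_cancel]
  · calc _ = (S * S * S + c • S) * W
          - (S * S * T + S * ⁅S, T⁆ + (⁅S, ⁅S, T⁆⁆ + c • T)) * V := by
          simp only [Matrix.add_mul, Matrix.mul_sub, Matrix.mul_assoc, Matrix.smul_mul, smul_sub]
          abel
      _ = _ := by
          rw [hS3, hST]
          simp only [Matrix.mul_add, Matrix.add_mul, Matrix.sub_mul, Matrix.mul_assoc,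
            Matrix.smul_mul, Matrix.mul_smul, Matrix.mul_neg, Matrix.neg_mul, Matrix.one_mul,
            neg_smul]
          abel

theorem ad_sq_add_smul_fromBlocks_zero_mul (hS : Sᵀ = -S) (hc : c = (1 / 2) * trace (Sᵀ * S))
    (U : Matrix (Fin 3) n ℝ) :
    (adX ^ 2) (fromBlocks 0 (S * U) 0 0) + c • fromBlocks 0 (S * U) 0 0 = 0 := by
  have hS3 : S * S * S = -c • S := hc ▸ mul_self_mul_self_of_transpose_eq_neg hS
  simp only [pow_succ, pow_zero, one_mul, Module.End.mul_apply, ad_apply,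
    lie_fromBlocks_zero_zero, lie_zero, Matrix.zero_mul, sub_zero, fromBlocks_smul,
    fromBlocks_add, smul_zero, add_zero]
  rw [← Matrix.mul_assoc, ← Matrix.mul_assoc, hS3, Matrix.smul_mul, ← add_smul,
    neg_add_cancel, zero_smul, fromBlocks_zero]

theorem ad_fromBlocks_quintic_apply_eq_zero (hS : Sᵀ = -S) (hT : Tᵀ = -T)
    (hc : c = (1 / 2) * trace (Sᵀ * S)) :
    (adX ^ 5) (fromBlocks T W 0 0) + (2 * c) • (adX ^ 3) (fromBlocks T W 0 0)
      + c ^ 2 • adX (fromBlocks T W 0 0) = 0 := by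
  obtain ⟨U, hU⟩ := exists_ad_pow_three_add_smul_ad_fromBlocks (W := W) hS hT hc
  calc _ = (adX ^ 2) ((adX ^ 3) (fromBlocks T W 0 0) + c • adX (fromBlocks T W 0 0))
        + c • ((adX ^ 3) (fromBlocks T W 0 0) + c • adX (fromBlocks T W 0 0)) := by
        simp only [pow_succ, pow_zero, one_mul, Module.End.mul_apply, map_add, map_smul]
        module
    _ = 0 := by rw [hU, ad_sq_add_smul_fromBlocks_zero_mul hS hc]

end SpecialEuclideanBlocks

end Matrix

theorem AlgEquiv.map_ad_pow_apply {R A B : Type*} [CommRing R] [Ring A] [Ring B] [Algebra R A]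
    [Algebra R B] (e : A ≃ₐ[R] B) (x y : A) (k : ℕ) :
    e ((ad R A x ^ k) y) = (ad R B (e x) ^ k) (e y) := by
  induction k with
  | zero => rfl
  | succ k ih => rw [pow_succ', Module.End.mul_apply, ad_apply, Ring.lie_def, map_sub, map_mul,
      map_mul, ih, pow_succ', Module.End.mul_apply, ad_apply, Ring.lie_def]

theorem adM_eq_ad {d : ℕ} (x : Matrix (Fin d) (Fin d) ℝ) : adM x = ad ℝ _ x :=
  (congrFun (ad_eq_lmul_left_sub_lmul_right (R := ℝ) _) x).symm

section seN

variable {N : ℕ} {ξ : Matrix (Fin (3 + N)) (Fin (3 + N)) ℝ}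

theorem rotBlock_transpose_of_mem_seN (h : mem_seN N ξ) : (rotBlock N ξ)ᵀ = -rotBlock N ξ := by
  ext i j
  exact h.2 _ _ (Fin.castAdd_lt N i) (Fin.castAdd_lt N j)

theorem exists_reindex_eq_fromBlocks_of_mem_seN (h : mem_seN N ξ) :
    ∃ V, reindex finSumFinEquiv.symm finSumFinEquiv.symm ξ = fromBlocks (rotBlock N ξ) V 0 0 := by
  refine ⟨toBlocks₁₂ (reindex finSumFinEquiv.symm finSumFinEquiv.symm ξ), ?_⟩
  ext (i | i) (j | j)
  all_goals simp [rotBlock, toBlocks₁₂]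
  all_goals exact h.1 _ _ (by simp)

theorem adM_quintic_apply_eq_zero_of_mem_seN {η : Matrix (Fin (3 + N)) (Fin (3 + N)) ℝ}
    (hξ : mem_seN N ξ) (hη : mem_seN N η) {c : ℝ}
    (hc : c = (1 / 2) * trace ((rotBlock N ξ)ᵀ * rotBlock N ξ)) :
    (adM ξ ^ 5) η + (2 * c) • (adM ξ ^ 3) η + c ^ 2 • adM ξ η = 0 := by
  let e := reindexAlgEquiv ℝ ℝ (finSumFinEquiv (m := 3) (n := N)).symm
  have he : e (ad ℝ _ ξ η) = ad ℝ _ (e ξ) (e η) := by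
    simpa only [pow_one] using e.map_ad_pow_apply ξ η 1
  obtain ⟨V, hV⟩ := exists_reindex_eq_fromBlocks_of_mem_seN hξ
  obtain ⟨W, hW⟩ := exists_reindex_eq_fromBlocks_of_mem_seN hη
  apply e.injective
  simp only [map_add, map_smul, map_zero, adM_eq_ad, he, AlgEquiv.map_ad_pow_apply, e,
    coe_reindexAlgEquiv, hV, hW]
  exact ad_fromBlocks_quintic_apply_eq_zero (rotBlock_transpose_of_mem_seN hξ)
    (rotBlock_transpose_of_mem_seN hη) hc

end seN

/-- **Proposition 4, closed form of `dexp(−ξ)` on `SE_N(3)`.** For `ξ ∈ 𝔰𝔢_N(3)` with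
rotational block `S` and `θ > 0` with `θ² = (1/2)·tr(Sᵀ S)`, the right Jacobian
`dexp(−ξ) = ∑_{i=0}^∞ ((−1)^i/(i+1)!)·ad_ξ^i` admits the closed form
`I + β₁·ad_ξ + β₂·ad_ξ² + β₃·ad_ξ³ + β₄·ad_ξ⁴` on `𝔰𝔢_N(3)`. -/
theorem dexp_closed_form_seN (N : ℕ) (ξ : Matrix (Fin (3 + N)) (Fin (3 + N)) ℝ)
    (hξ : mem_seN N ξ) (θ : ℝ) (hθ : 0 < θ)
    (hθ_sq : θ ^ 2 = (1 / 2) * Matrix.trace ((rotBlock N ξ).transpose * rotBlock N ξ)) :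
    ∀ η : Matrix (Fin (3 + N)) (Fin (3 + N)) ℝ, mem_seN N η →
      ∑' i : ℕ, ((-1 : ℝ) ^ i / (Nat.factorial (i + 1) : ℝ)) • ((adM ξ ^ i) η) =
        η + ((4 * Real.cos θ - 4 + θ * Real.sin θ) / (2 * θ ^ 2)) • (adM ξ η)
          + ((4 * θ - 5 * Real.sin θ + θ * Real.cos θ) / (2 * θ ^ 3)) • ((adM ξ ^ 2) η)
          + ((θ * Real.sin θ + 2 * Real.cos θ - 2) / (2 * θ ^ 4)) • ((adM ξ ^ 3) η)
          + ((2 * θ - 3 * Real.sin θ + θ * Real.cos θ) / (2 * θ ^ 5)) • ((adM ξ ^ 4) η)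
      := fun η hη =>
  (Module.End.hasSum_dexp_neg_apply_of_quintic hθ.ne'
    (adM_quintic_apply_eq_zero_of_mem_seN hξ hη hθ_sq)).tsum_eq
end
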